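/- Let α₁, α₂, α₃, β₁, β₂, β₃, k₊, k₋ be real numbers with W± := α₂ ± β₁, X± := α₂ ± β₃, Y± := β₂ ± α₁, Z± := β₂ ± α₃, (W₋, Z₋) = k₊(−Y₊, X₊), (W₊, Z₊) = k₋(−Y₋, X₋), and suppose that α₁β₂ − α₂β₁ = 0 and α₂β₃ − α₃β₂ = 0. Then X₊²Y₋² − X₋²Y₊² = 0. -/

import Mathlib

/-!
Eliminating `k₊` from `(W₋, Z₋) = k₊(-Y₊, X₊)` and using the two vanishing minors gives
`α₂² + β₂² = α₁α₃ + β₁β₃`. If `(α₂, β₂) ≠ 0`, the minors make `(α₁, β₁)` and `(α₃, β₃)` multiples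
`s (α₂, β₂)` and `t (α₂, β₂)`, so this reads `st = 1`, i.e. `α₂β₂ = α₁β₃`. Since
`X₊²Y₋² - X₋²Y₊² = 4 (β₂β₃ - α₁α₂)(α₂β₂ - α₁β₃)`, the first factor vanishes when
`α₂ = β₂ = 0` and the second one otherwise.
-/

section CommRing

variable {R : Type*} [CommRing R]

theorem add_sq_mul_sub_sq_sub_sub_sq_mul_add_sq (a b c d : R) :
    (a + b) ^ 2 * (c - d) ^ 2 - (a - b) ^ 2 * (c + d) ^ 2
      = 4 * (b * c - a * d) * (a * c - b * d) := by
  ring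

theorem mul_self_add_mul_self_eq_of_proportional {α₁ α₂ α₃ β₁ β₂ β₃ k : R}
    (hW : α₂ - β₁ = k * -(β₂ + α₁)) (hZ : β₂ - α₃ = k * (α₂ + β₃))
    (h₁₂ : α₁ * β₂ - α₂ * β₁ = 0) (h₂₃ : α₂ * β₃ - α₃ * β₂ = 0) :
    α₂ * α₂ + β₂ * β₂ = α₁ * α₃ + β₁ * β₃ := by
  linear_combination (α₂ + β₃) * hW + (β₂ + α₁) * hZ - h₁₂ - h₂₃

end CommRing

theorem eq_zero_and_eq_zero_or_mul_eq_mul_of_proportional {R : Type*} [CommRing R]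
    [LinearOrder R] [IsStrictOrderedRing R] {α₁ α₂ α₃ β₁ β₂ β₃ k : R}
    (hW : α₂ - β₁ = k * -(β₂ + α₁)) (hZ : β₂ - α₃ = k * (α₂ + β₃))
    (h₁₂ : α₁ * β₂ - α₂ * β₁ = 0) (h₂₃ : α₂ * β₃ - α₃ * β₂ = 0) :
    (α₂ = 0 ∧ β₂ = 0) ∨ α₂ * β₂ = α₁ * β₃ := by
  have hnorm := mul_self_add_mul_self_eq_of_proportional hW hZ h₁₂ h₂₃
  have hprod : (α₂ * β₂ - α₁ * β₃) * (α₂ * α₂ + β₂ * β₂) = 0 := by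
    linear_combination α₂ * β₂ * hnorm - α₁ * α₂ * h₂₃ - β₂ * β₃ * h₁₂
  rcases mul_eq_zero.mp hprod with h | h
  · exact Or.inr (sub_eq_zero.mp h)
  · exact Or.inl (mul_self_add_mul_self_eq_zero.mp h)

theorem stmt_4_general (α₁ α₂ α₃ β₁ β₂ β₃ kp : ℝ)
    (Wm Xp Xm Yp Ym Zm : ℝ)
    (hWm : Wm = α₂ - β₁)
    (hXp : Xp = α₂ + β₃) (hXm : Xm = α₂ - β₃)
    (hYp : Yp = β₂ + α₁) (hYm : Ym = β₂ - α₁)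
    (hZm : Zm = β₂ - α₃)
    (h1 : Wm = kp * (-Yp)) (h2 : Zm = kp * Xp)
    (h5 : α₁ * β₂ - α₂ * β₁ = 0) (h6 : α₂ * β₃ - α₃ * β₂ = 0) :
    Xp ^ 2 * Ym ^ 2 - Xm ^ 2 * Yp ^ 2 = 0 := by
  subst hWm hXp hXm hYp hYm hZm
  rw [add_sq_mul_sub_sq_sub_sub_sq_mul_add_sq]
  rcases eq_zero_and_eq_zero_or_mul_eq_mul_of_proportional h1 h2 h5 h6 with ⟨rfl, rfl⟩ | h
  · ring
  · rw [mul_comm β₃ α₁, h, sub_self, mul_zero]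

theorem stmt_4 (α₁ α₂ α₃ β₁ β₂ β₃ kp km : ℝ)
    (Wp Wm Xp Xm Yp Ym Zp Zm : ℝ)
    (hWp : Wp = α₂ + β₁) (hWm : Wm = α₂ - β₁)
    (hXp : Xp = α₂ + β₃) (hXm : Xm = α₂ - β₃)
    (hYp : Yp = β₂ + α₁) (hYm : Ym = β₂ - α₁)
    (hZp : Zp = β₂ + α₃) (hZm : Zm = β₂ - α₃)
    (h1 : Wm = kp * (-Yp)) (h2 : Zm = kp * Xp)
    (h3 : Wp = km * (-Ym)) (h4 : Zp = km * Xm)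
    (h5 : α₁ * β₂ - α₂ * β₁ = 0) (h6 : α₂ * β₃ - α₃ * β₂ = 0) :
    Xp ^ 2 * Ym ^ 2 - Xm ^ 2 * Yp ^ 2 = 0 :=
  stmt_4_general α₁ α₂ α₃ β₁ β₂ β₃ kp Wm Xp Xm Yp Ym Zm hWm hXp hXm hYp hYm hZm h1 h2 h5 h6
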